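/- Assume ℓ : ℝ → ℝ is convex and its conjugate ℓ* is γ-strongly convex with γ ≥ 0. Fix x ∈ ℝ^d, w ∈ ℝ^d, a current dual value a ∈ ℝ, and u ∈ ℝ with −u ∈ ∂ℓ(xᵀw) (∂ denoting the subdifferential). Then for every s ∈ [0,1], the optimal single-coordinate dual ascent step satisfies: sup_{Δ∈ℝ} [ −ℓ*(−(a+Δ)) − (λn/2)·‖w + (Δ/(λn))·x‖² ] − [ −ℓ*(−a) − (λn/2)·‖w‖² ] ≥ s·[ ℓ(xᵀw) + ℓ*(−a) + a·xᵀw + (1/2)·(γ·(1−s) − (s/(λn))·‖x‖²)·(u − a)² ], where λ > 0 and n ≥ 1 are fixed. -/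

import Mathlib

open Finset MeasureTheory

noncomputable section

/-- Squared Euclidean norm of a finite real vector. -/
def sqnorm {m : ℕ} (v : Fin m → ℝ) : ℝ := ∑ j, v j ^ 2

/-- Euclidean norm of a finite real vector. -/
def euclNorm {m : ℕ} (v : Fin m → ℝ) : ℝ := Real.sqrt (sqnorm v)

/-- Euclidean inner product. -/
def dotp {m : ℕ} (u v : Fin m → ℝ) : ℝ := ∑ j, u j * v j

/-- `g` is the (real-valued) Fenchel conjugate of `f`:
`g u` is the least upper bound of `z ↦ u*z - f z`. -/
def IsFenchelConj (f g : ℝ → ℝ) : Prop :=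
  ∀ u : ℝ, IsLUB (Set.range fun z : ℝ => u * z - f z) (g u)

/-- `f` is smooth with constant `c`: differentiable with `c`-Lipschitz derivative. -/
def SmoothWith (c : ℝ) (f : ℝ → ℝ) : Prop :=
  Differentiable ℝ f ∧ ∀ z z' : ℝ, |deriv f z - deriv f z'| ≤ c * |z - z'|

/-- `g : ℝ → ℝ` is `γ`-strongly convex. -/
def StrongConvexWith (γ : ℝ) (g : ℝ → ℝ) : Prop :=
  ConvexOn ℝ Set.univ fun u => g u - γ / 2 * u ^ 2

variable {n d K : ℕ}

/-- `A α` where the `i`-th column of `A` is `x i / (λ n)`. -/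
def matA (lam : ℝ) (x : Fin n → Fin d → ℝ) (α : Fin n → ℝ) : Fin d → ℝ :=
  ∑ i, (α i / (lam * n)) • x i

/-- The block-`k` subvector `α_[k]` of `α`. -/
def blkOf (part : Fin n → Fin K) (k : Fin K) (α : Fin n → ℝ) :
    {i : Fin n // part i = k} → ℝ :=
  fun i => α i.1

/-- `A_[k] β`: the block-`k` submatrix of `A` applied to a block-`k` vector. -/
def blkA (lam : ℝ) (x : Fin n → Fin d → ℝ) (part : Fin n → Fin K) (k : Fin K)
    (β : {i : Fin n // part i = k} → ℝ) : Fin d → ℝ :=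
  ∑ i : {i : Fin n // part i = k}, (β i / (lam * n)) • x i.1

/-- `α⟨k←β⟩`: replace the block-`k` coordinates of `α` by `β`. -/
def updBlk (part : Fin n → Fin K) (k : Fin K) (α : Fin n → ℝ)
    (β : {i : Fin n // part i = k} → ℝ) : Fin n → ℝ :=
  fun i => if h : part i = k then β ⟨i, h⟩ else α i

/-- `ι_k β`: zero-padding of a block-`k` vector to a full vector. -/
def padBlk (part : Fin n → Fin K) (k : Fin K)
    (β : {i : Fin n // part i = k} → ℝ) : Fin n → ℝ :=
  fun i => if h : part i = k then β ⟨i, h⟩ else 0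

/-- The primal objective `P(w)`. -/
def primalObj (lam : ℝ) (x : Fin n → Fin d → ℝ) (l : Fin n → ℝ → ℝ)
    (w : Fin d → ℝ) : ℝ :=
  lam / 2 * sqnorm w + (1 / (n : ℝ)) * ∑ i, l i (dotp w (x i))

/-- The dual objective `D(α)`. -/
def dualObj (lam : ℝ) (x : Fin n → Fin d → ℝ) (lstar : Fin n → ℝ → ℝ)
    (α : Fin n → ℝ) : ℝ :=
  -(lam / 2) * sqnorm (matA lam x α) - (1 / (n : ℝ)) * ∑ i, lstar i (-(α i))

/-- The local suboptimality `ε_{D,k}(α)` on block `k`. -/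
def epsD (lam : ℝ) (x : Fin n → Fin d → ℝ) (lstar : Fin n → ℝ → ℝ)
    (part : Fin n → Fin K) (k : Fin K) (α : Fin n → ℝ) : ℝ :=
  ⨆ β : {i : Fin n // part i = k} → ℝ,
    dualObj lam x lstar (updBlk part k α β) - dualObj lam x lstar α

/-- `σ_min`: the supremum over nonzero `α` of
`λ²n²·(Σ_k ‖A_[k]α_[k]‖² − ‖Aα‖²)/‖α‖²`. -/
def sigmaMin (lam : ℝ) (x : Fin n → Fin d → ℝ) (part : Fin n → Fin K) : ℝ :=
  sSup { r : ℝ | ∃ α : Fin n → ℝ, α ≠ 0 ∧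
    r = lam ^ 2 * (n : ℝ) ^ 2 *
      ((∑ k, sqnorm (blkA lam x part k (blkOf part k α))) - sqnorm (matA lam x α)) /
        sqnorm α }

/-- The local dual objective `D_k(β; w̄)` on block `k`. -/
def locDual (lam : ℝ) (x : Fin n → Fin d → ℝ) (lstar : Fin n → ℝ → ℝ)
    (part : Fin n → Fin K) (k : Fin K) (wbar : Fin d → ℝ)
    (β : {i : Fin n // part i = k} → ℝ) : ℝ :=
  -(lam / 2) * sqnorm (wbar + blkA lam x part k β)
    - (1 / (n : ℝ)) * ∑ i : {i : Fin n // part i = k}, lstar i.1 (-(β i))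
    + lam / 2 * sqnorm wbar

/-- The local primal objective `P_k(v; w̄)` on block `k`. -/
def locPrimal (lam : ℝ) (x : Fin n → Fin d → ℝ) (l : Fin n → ℝ → ℝ)
    (part : Fin n → Fin K) (k : Fin K) (wbar v : Fin d → ℝ) : ℝ :=
  (1 / (n : ℝ)) * ∑ i : {i : Fin n // part i = k}, l i.1 (dotp (wbar + v) (x i.1))
    + lam / 2 * sqnorm v

/-- Run `H` iterations of the coordinate-wise step `st`, where `ω` lists
the (randomly chosen) coordinates used in the successive iterations. -/
def iterRun {γ : Type*} {ι : Type*} (st : ι → γ → γ) :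
    (H : ℕ) → (Fin H → ι) → γ → γ
  | 0, _, b => b
  | H + 1, ω, b => iterRun st H (fun h => ω h.succ) (st (ω 0) b)

/-! The step `Δ = s (u - a)` moves `-a` a fraction `s` of the way towards `-u`. Strong
convexity of `ℓ*` bounds `ℓ*(-(a + Δ))` by the chord through `ℓ*(-a)` and `ℓ*(-u)` minus
`γ s (1 - s) (u - a)² / 2`, and since `-u` is a subgradient of `ℓ` at `xᵀw`, Fenchel–Young
holds with equality there: `ℓ*(-u) = -u xᵀw - ℓ(xᵀw)`. The quadratic term is expanded
exactly, and what remains is algebra. -/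

lemma sqnorm_nonneg {m : ℕ} (v : Fin m → ℝ) : 0 ≤ sqnorm v :=
  sum_nonneg fun j _ => sq_nonneg (v j)

lemma sqnorm_add_smul {m : ℕ} (w x : Fin m → ℝ) (c : ℝ) :
    sqnorm (w + c • x) = sqnorm w + 2 * c * dotp x w + c ^ 2 * sqnorm x := by
  simp only [sqnorm, dotp, Pi.add_apply, Pi.smul_apply, smul_eq_mul, mul_sum, ← sum_add_distrib]
  exact sum_congr rfl fun j _ => by ring

namespace IsFenchelConj

variable {f g : ℝ → ℝ}

lemma mul_sub_le (hfg : IsFenchelConj f g) (v z : ℝ) : v * z - f z ≤ g v :=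
  (hfg v).1 ⟨z, rfl⟩

lemma neg_le_apply_zero (hfg : IsFenchelConj f g) (v : ℝ) : -g v ≤ f 0 := by
  linarith [hfg.mul_sub_le v 0]

lemma apply_eq_of_subgradient (hfg : IsFenchelConj f g) {t v : ℝ}
    (hv : ∀ y, f t + v * (y - t) ≤ f y) : g v = v * t - f t := by
  refine le_antisymm ((hfg v).2 ?_) (hfg.mul_sub_le v t)
  rintro _ ⟨z, rfl⟩
  linarith [hv z]

end IsFenchelConj

lemma StrongConvexWith.apply_convex_combination_le {γ : ℝ} {g : ℝ → ℝ}
    (hg : StrongConvexWith γ g) (p q : ℝ) {s : ℝ} (hs0 : 0 ≤ s) (hs1 : s ≤ 1) :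
    g ((1 - s) * p + s * q) ≤ (1 - s) * g p + s * g q - γ / 2 * s * (1 - s) * (p - q) ^ 2 := by
  have h := hg.2 (Set.mem_univ p) (Set.mem_univ q) (sub_nonneg.2 hs1) hs0 (by ring)
  simp only [smul_eq_mul] at h
  linear_combination h

theorem single_coordinate_step_improvement_general
    (n : ℕ) (hn : 0 < n) (lam : ℝ) (hlam : 0 < lam) (d : ℕ)
    (l lstar : ℝ → ℝ)
    (hconj : IsFenchelConj l lstar)
    (γ : ℝ) (hstrong : StrongConvexWith γ lstar)
    (x w : Fin d → ℝ) (a u : ℝ)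
    -- −u ∈ ∂ℓ(xᵀw)
    (hu : ∀ y : ℝ, l (dotp x w) + (-u) * (y - dotp x w) ≤ l y)
    (s : ℝ) (hs0 : 0 ≤ s) (hs1 : s ≤ 1) :
    s * (l (dotp x w) + lstar (-a) + a * dotp x w
        + 1 / 2 * (γ * (1 - s) - s / (lam * n) * sqnorm x) * (u - a) ^ 2)
      ≤ (⨆ Δ : ℝ, (-(lstar (-(a + Δ)))
            - lam * n / 2 * sqnorm (w + (Δ / (lam * n)) • x)))
        - (-(lstar (-a)) - lam * n / 2 * sqnorm w) := by
  have hL : 0 < lam * n := by positivity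
  have hbdd : BddAbove (Set.range fun Δ : ℝ =>
      -(lstar (-(a + Δ))) - lam * n / 2 * sqnorm (w + (Δ / (lam * n)) • x)) := by
    refine ⟨l 0, ?_⟩
    rintro _ ⟨Δ, rfl⟩
    nlinarith [hconj.neg_le_apply_zero (-(a + Δ)), sqnorm_nonneg (w + (Δ / (lam * n)) • x)]
  have hstep := le_ciSup hbdd (s * (u - a))
  have hchord := hstrong.apply_convex_combination_le (-a) (-u) hs0 hs1
  rw [show (1 - s) * -a + s * -u = -(a + s * (u - a)) by ring,
    hconj.apply_eq_of_subgradient hu] at hchord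
  rw [sqnorm_add_smul] at hstep
  have hcross : lam * n / 2 * (2 * (s * (u - a) / (lam * n)) * dotp x w)
      = s * (u - a) * dotp x w := by
    field_simp
  have hquad : lam * n / 2 * ((s * (u - a) / (lam * n)) ^ 2 * sqnorm x)
      = s / (lam * n) * sqnorm x * s * (u - a) ^ 2 / 2 := by
    field_simp
  linear_combination hstep + hchord + hcross + hquad

/-- improvement of the optimal single-coordinate dual ascent step. -/
theorem single_coordinate_step_improvement
    (n : ℕ) (hn : 0 < n) (lam : ℝ) (hlam : 0 < lam) (d : ℕ)
    (l lstar : ℝ → ℝ)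
    (hconj : IsFenchelConj l lstar)
    (hconv : ConvexOn ℝ Set.univ l)
    (γ : ℝ) (hγ : 0 ≤ γ) (hstrong : StrongConvexWith γ lstar)
    (x w : Fin d → ℝ) (a u : ℝ)
    -- −u ∈ ∂ℓ(xᵀw)
    (hu : ∀ y : ℝ, l (dotp x w) + (-u) * (y - dotp x w) ≤ l y)
    (s : ℝ) (hs0 : 0 ≤ s) (hs1 : s ≤ 1) :
    s * (l (dotp x w) + lstar (-a) + a * dotp x w
        + 1 / 2 * (γ * (1 - s) - s / (lam * n) * sqnorm x) * (u - a) ^ 2)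
      ≤ (⨆ Δ : ℝ, (-(lstar (-(a + Δ)))
            - lam * n / 2 * sqnorm (w + (Δ / (lam * n)) • x)))
        - (-(lstar (-a)) - lam * n / 2 * sqnorm w) :=
  single_coordinate_step_improvement_general n hn lam hlam d l lstar hconj γ hstrong x w a u hu s
    hs0 hs1
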